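/- Let (X, 𝔄, d) be a C*-algebra valued metric space over a unital C*-algebra 𝔄, and let T : X → X satisfy d(Tx, Ty) ⪯ A · (d(x,Tx) + d(y,Ty)) for all x,y ∈ X, where A is a positive element of 𝔄 commuting with every element of 𝔄 and ‖A‖ < 1/2. Set B := A(1 − A)⁻¹. Then for all x, y ∈ X and all n ≥ 1, d(Tⁿx, Tⁿy) ⪯ Bⁿ · (d(x,Tx) + d(y,Ty)); in particular T is a C*-algebra valued Ćirić-type2 contractive mapping. -/

import Mathlib

/-!
Writing `B = A(1 - A)⁻¹`, the contraction condition at `z, Tz` reads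
`(1 - A) d(Tz, T²z) ⪯ A d(z, Tz)`; multiplying by the positive central element `(1 - A)⁻¹` gives
`d(Tz, T²z) ⪯ B d(z, Tz)`, hence `d(Tⁿz, Tⁿ⁺¹z) ⪯ Bⁿ d(z, Tz)`. The contraction condition at
`Tⁿx, Tⁿy` and `A ⪯ B` then give `d(Tⁿ⁺¹x, Tⁿ⁺¹y) ⪯ Bⁿ⁺¹ (d(x, Tx) + d(y, Ty))`, and
`‖B‖ < 1` follows from `B = A + AB`. Central positive elements may be multiplied into
inequalities because `p s*s = s* p s`. Positivity of `1 - A` comes from a self-adjoint square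
root `1 - l`, where `l` is the fixed point of the contraction `y ↦ (A + y²)/2` on the self-adjoint
part of the ball of radius `1/2`.
-/

open Filter Topology Function

/-- A C*-algebra valued metric space: `d : X × X → A` into a unital C*-algebra `A`. -/
structure CStarMetric (X : Type*) (A : Type*) [NormedRing A] [StarRing A] [PartialOrder A] where
  d : X → X → A
  nonneg : ∀ x y, 0 ≤ d x y
  eq_zero_iff : ∀ x y, d x y = 0 ↔ x = y
  symm : ∀ x y, d x y = d y x
  triangle : ∀ x y z, d x y ≤ d x z + d z y

variable {X A : Type*} [NormedRing A] [StarRing A] [CStarRing A] [PartialOrder A]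
  [StarOrderedRing A] [CompleteSpace A] [NormedAlgebra ℂ A]

/-- A sequence converges to `x` when `‖d (s n) x‖ → 0`. -/
def CStarConverges (M : CStarMetric X A) (s : ℕ → X) (x : X) : Prop :=
  Tendsto (fun n => ‖M.d (s n) x‖) atTop (𝓝 (0 : ℝ))

/-- Cauchy sequence: `‖d (s n) (s m)‖ → 0` as `n, m → ∞`. -/
def CStarCauchy (M : CStarMetric X A) (s : ℕ → X) : Prop :=
  ∀ ε : ℝ, 0 < ε → ∃ N : ℕ, ∀ n m : ℕ, N ≤ n → N ≤ m → ‖M.d (s n) (s m)‖ < ε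

/-- Completeness: every Cauchy sequence converges. -/
def CStarComplete (M : CStarMetric X A) : Prop :=
  ∀ s : ℕ → X, CStarCauchy M s → ∃ x, CStarConverges M s x

/-- Orbital continuity of `T` at `u`. -/
def OrbContAt (M : CStarMetric X A) (T : X → X) (u : X) : Prop :=
  ∀ (x : X) (k : ℕ → ℕ), StrictMono k →
    Tendsto (fun i => ‖M.d (T^[k i] x) u‖) atTop (𝓝 (0 : ℝ)) →
    Tendsto (fun i => ‖M.d (T^[k i + 1] x) (T u)‖) atTop (𝓝 (0 : ℝ))

/-- Orbital continuity of `T` on `X`. -/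
def OrbCont (M : CStarMetric X A) (T : X → X) : Prop :=
  ∀ u, OrbContAt M T u

/-- Ćirić-type1 contractive mapping. -/
def CiricType1 (M : CStarMetric X A) (T : X → X) : Prop :=
  ∃ q δ : X → X → A, (∀ x y, ‖q x y‖ < 1) ∧ (∀ x y, 0 ≤ δ x y) ∧
    ∀ x y : X, ∀ n : ℕ, 1 ≤ n →
      M.d (T^[n] x) (T^[n] y) ≤ star (q x y) ^ n * δ x y * q x y ^ n

/-- Ćirić-type2 contractive mapping: `q` takes values in the central positive elements. -/
def CiricType2 (M : CStarMetric X A) (T : X → X) : Prop :=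
  ∃ q δ : X → X → A,
    (∀ x y, 0 ≤ q x y ∧ (∀ b : A, q x y * b = b * q x y) ∧ ‖q x y‖ < 1) ∧
    (∀ x y, 0 ≤ δ x y) ∧
    ∀ x y : X, ∀ n : ℕ, 1 ≤ n → M.d (T^[n] x) (T^[n] y) ≤ q x y ^ n * δ x y


section Center

variable {R : Type*} [Ring R] [PartialOrder R] [StarRing R] [StarOrderedRing R]

theorem Ring.inverse_mem_center {M₀ : Type*} [MonoidWithZero M₀] {a : M₀}
    (ha : a ∈ Set.center M₀) : Ring.inverse a ∈ Set.center M₀ := by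
  by_cases hu : IsUnit a
  · obtain ⟨u, rfl⟩ := hu
    rw [Ring.inverse_unit]
    exact Set.units_inv_mem_center ha
  · rw [Ring.inverse_non_unit a hu]
    exact Set.zero_mem_center

theorem mul_nonneg_of_mem_center {p x : R} (hp : p ∈ Set.center R) (hp0 : 0 ≤ p)
    (hx : 0 ≤ x) : 0 ≤ p * x := by
  rw [StarOrderedRing.nonneg_iff] at hx
  induction hx using AddSubmonoid.closure_induction with
  | mem z hz =>
    obtain ⟨s, rfl⟩ := hz
    rw [← mul_assoc, (hp.comm (star s)).eq]
    exact star_left_conjugate_nonneg hp0 s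
  | zero => rw [mul_zero]
  | add x y _ _ hx hy => rw [mul_add]; exact add_nonneg hx hy

theorem mul_le_mul_of_mem_center {p x y : R} (hp : p ∈ Set.center R) (hp0 : 0 ≤ p)
    (h : x ≤ y) : p * x ≤ p * y := by
  simpa only [mul_sub, sub_nonneg] using mul_nonneg_of_mem_center hp hp0 (sub_nonneg.2 h)

theorem pow_nonneg_of_mem_center {p : R} (hp : p ∈ Set.center R) (hp0 : 0 ≤ p) (n : ℕ) :
    0 ≤ p ^ n := by
  induction n with
  | zero => exact pow_zero p ▸ zero_le_one
  | succ n ih => rw [pow_succ']; exact mul_nonneg_of_mem_center hp hp0 ih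

theorem Ring.inverse_nonneg {u : R} (hu : 0 ≤ u) (hunit : IsUnit u) : 0 ≤ Ring.inverse u := by
  have h : star (Ring.inverse u) * star u = 1 := by
    rw [← star_mul, Ring.mul_inverse_cancel u hunit, star_one]
  rw [hu.star_eq] at h
  simpa only [h, one_mul] using star_left_conjugate_nonneg hu (Ring.inverse u)

end Center

section InverseOneSub

theorem mul_inverse_one_sub_mem_center {R : Type*} [Ring R] {a : R} (ha : a ∈ Set.center R) :
    a * Ring.inverse (1 - a) ∈ Set.center R :=
  Set.mul_mem_center ha <|
    Ring.inverse_mem_center ((Subring.center R).sub_mem (Subring.center R).one_mem ha)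

theorem mul_inverse_one_sub_eq_add {R : Type*} [Ring R] {a : R} (h : IsUnit (1 - a)) :
    a * Ring.inverse (1 - a) = a + a * (a * Ring.inverse (1 - a)) :=
  calc a * Ring.inverse (1 - a)
      = a * ((1 - a) * Ring.inverse (1 - a)) + a * (a * Ring.inverse (1 - a)) := by
        rw [← mul_add, sub_mul, one_mul, sub_add_cancel]
    _ = a + a * (a * Ring.inverse (1 - a)) := by rw [Ring.mul_inverse_cancel _ h, mul_one]

theorem norm_mul_inverse_one_sub_lt_one {R : Type*} [NormedRing R] [CompleteSpace R] {a : R}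
    (ha : ‖a‖ < 1 / 2) : ‖a * Ring.inverse (1 - a)‖ < 1 := by
  have h := mul_inverse_one_sub_eq_add (isUnit_one_sub_of_norm_lt_one (ha.trans (by norm_num)))
  have hle : ‖a * Ring.inverse (1 - a)‖ ≤ ‖a‖ + ‖a‖ * ‖a * Ring.inverse (1 - a)‖ := by
    conv_lhs => rw [h]
    exact (norm_add_le _ _).trans (add_le_add_right (norm_mul_le _ _) _)
  nlinarith [norm_nonneg a, norm_nonneg (a * Ring.inverse (1 - a))]

end InverseOneSub

section SquareRoot

variable {B : Type*} [NormedRing B] [NormedAlgebra ℂ B]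

noncomputable def oneSubSqrtMap (a y : B) : B := (2⁻¹ : ℂ) • (a + y * y)

theorem oneSubSqrtMap_sub (a p q : B) :
    oneSubSqrtMap a p - oneSubSqrtMap a q = (2⁻¹ : ℂ) • (p * (p - q) + (p - q) * q) := by
  rw [oneSubSqrtMap, oneSubSqrtMap, ← smul_sub]
  congr 1
  noncomm_ring

theorem dist_oneSubSqrtMap_le (a : B) {p q : B} (hp : ‖p‖ ≤ 1 / 2) (hq : ‖q‖ ≤ 1 / 2) :
    dist (oneSubSqrtMap a p) (oneSubSqrtMap a q) ≤ 1 / 2 * dist p q := by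
  rw [dist_eq_norm, dist_eq_norm, oneSubSqrtMap_sub, norm_smul, norm_inv, Complex.norm_two]
  calc 2⁻¹ * ‖p * (p - q) + (p - q) * q‖ ≤ 2⁻¹ * (‖p‖ * ‖p - q‖ + ‖p - q‖ * ‖q‖) := by
        gcongr
        exact (norm_add_le _ _).trans (add_le_add (norm_mul_le _ _) (norm_mul_le _ _))
    _ ≤ 2⁻¹ * (1 / 2 * ‖p - q‖ + ‖p - q‖ * (1 / 2)) := by gcongr
    _ = 1 / 2 * ‖p - q‖ := by ring

theorem one_sub_mul_self_eq_of_isFixedPt {a l : B} (hl : IsFixedPt (oneSubSqrtMap a) l) :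
    (1 - l) * (1 - l) = 1 - a := by
  have h2l : l + l = a + l * l :=
    calc l + l = (2 : ℂ) • oneSubSqrtMap a l := by rw [hl.eq, two_smul]
      _ = a + l * l := by rw [oneSubSqrtMap, smul_smul]; norm_num
  calc (1 - l) * (1 - l) = 1 - (l + l) + l * l := by noncomm_ring
    _ = 1 - a := by rw [h2l]; abel

variable [StarRing B]

theorem mapsTo_oneSubSqrtMap {a : B} (ha : IsSelfAdjoint a) (h : ‖a‖ ≤ 1 / 2) :
    Set.MapsTo (oneSubSqrtMap a) (Metric.closedBall 0 (1 / 2) ∩ {y | IsSelfAdjoint y})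
      (Metric.closedBall 0 (1 / 2) ∩ {y | IsSelfAdjoint y}) := by
  rintro y ⟨hy, hy_sa⟩
  rw [Metric.mem_closedBall, dist_zero_right] at hy
  refine ⟨?_, ?_⟩
  · rw [Metric.mem_closedBall, dist_zero_right, oneSubSqrtMap, norm_smul, norm_inv,
      Complex.norm_two]
    calc 2⁻¹ * ‖a + y * y‖ ≤ 2⁻¹ * (1 / 2 + 1 / 2 * (1 / 2)) := by
          gcongr
          exact (norm_add_le _ _).trans (add_le_add h ((norm_mul_le _ _).trans (by gcongr)))
      _ ≤ 1 / 2 := by norm_num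
  · have h2 := star_inv_natCast_smul (R := ℂ) 2 (a + y * y)
    rw [Nat.cast_ofNat] at h2
    show star (oneSubSqrtMap a y) = oneSubSqrtMap a y
    rw [oneSubSqrtMap, h2, star_add, star_mul, hy_sa.star_eq, ha.star_eq]

variable [ContinuousStar B] [CompleteSpace B]

-- `B` need not be a `StarModule ℂ B`, so the continuous functional calculus does not apply.
theorem exists_isSelfAdjoint_one_sub_mul_self_eq {a : B} (ha : IsSelfAdjoint a)
    (h : ‖a‖ ≤ 1 / 2) : ∃ l, IsSelfAdjoint l ∧ (1 - l) * (1 - l) = 1 - a := by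
  set s : Set B := Metric.closedBall 0 (1 / 2) ∩ {y | IsSelfAdjoint y}
  have hs : IsComplete s :=
    (Metric.isClosed_closedBall.inter (isClosed_eq continuous_star continuous_id)).isComplete
  have hmaps := mapsTo_oneSubSqrtMap ha h
  have hcontr : ContractingWith (1 / 2) (hmaps.restrict _ s s) := by
    refine ⟨by norm_num, LipschitzWith.of_dist_le_mul fun ⟨p, hp, _⟩ ⟨q, hq, _⟩ => ?_⟩
    rw [Metric.mem_closedBall, dist_zero_right] at hp hq
    simpa only [Subtype.dist_eq, Set.MapsTo.val_restrict_apply, NNReal.coe_div,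
      NNReal.coe_one, NNReal.coe_ofNat] using dist_oneSubSqrtMap_le a hp hq
  obtain ⟨l, hl, hfix, -⟩ :=
    hcontr.exists_fixedPoint' hs hmaps (x := 0) (by simp [s]) (edist_ne_top _ _)
  exact ⟨l, hl.2, one_sub_mul_self_eq_of_isFixedPt hfix⟩

variable [PartialOrder B] [StarOrderedRing B]

theorem one_sub_nonneg_of_norm_le_half {a : B} (ha : IsSelfAdjoint a) (h : ‖a‖ ≤ 1 / 2) :
    0 ≤ 1 - a := by
  obtain ⟨l, hl, hsq⟩ := exists_isSelfAdjoint_one_sub_mul_self_eq ha h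
  rw [← hsq]
  exact ((IsSelfAdjoint.one B).sub hl).mul_self_nonneg

theorem inverse_one_sub_nonneg_of_norm_lt_half {a : B} (ha : 0 ≤ a) (h : ‖a‖ < 1 / 2) :
    0 ≤ Ring.inverse (1 - a) :=
  Ring.inverse_nonneg (one_sub_nonneg_of_norm_le_half (IsSelfAdjoint.of_nonneg ha) h.le)
    (isUnit_one_sub_of_norm_lt_one (h.trans (by norm_num)))

end SquareRoot
section Kannan

variable {R : Type*} [NormedRing R] [StarRing R] [PartialOrder R] [StarOrderedRing R]
  {X : Type*} (M : CStarMetric X R) (T : X → X)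

def IsKannanType (a : R) : Prop :=
  ∀ x y, M.d (T x) (T y) ≤ a * (M.d x (T x) + M.d y (T y))

variable {M T} {a b : R}

theorem CStarMetric.d_iterate_apply_le_pow_mul (hb : b ∈ Set.center R) (hb0 : 0 ≤ b)
    (hstep : ∀ z, M.d (T z) (T (T z)) ≤ b * M.d z (T z)) (z : X) (n : ℕ) :
    M.d (T^[n] z) (T (T^[n] z)) ≤ b ^ n * M.d z (T z) := by
  induction n with
  | zero => rw [iterate_zero_apply, pow_zero, one_mul]
  | succ n ih =>
    calc M.d (T^[n + 1] z) (T (T^[n + 1] z))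
        ≤ b * M.d (T^[n] z) (T (T^[n] z)) := by rw [iterate_succ_apply']; exact hstep _
      _ ≤ b * (b ^ n * M.d z (T z)) := mul_le_mul_of_mem_center hb hb0 ih
      _ = b ^ (n + 1) * M.d z (T z) := by rw [pow_succ', mul_assoc]

theorem IsKannanType.d_apply_apply_le (hT : IsKannanType M T a) (ha : a ∈ Set.center R)
    (hunit : IsUnit (1 - a)) (hinv : 0 ≤ Ring.inverse (1 - a)) (z : X) :
    M.d (T z) (T (T z)) ≤ a * Ring.inverse (1 - a) * M.d z (T z) := by
  have hinv_center : Ring.inverse (1 - a) ∈ Set.center R :=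
    Ring.inverse_mem_center ((Subring.center R).sub_mem (Subring.center R).one_mem ha)
  have h : (1 - a) * M.d (T z) (T (T z)) ≤ a * M.d z (T z) := by
    rw [sub_mul, one_mul, sub_le_iff_le_add, ← mul_add]
    exact hT z (T z)
  calc M.d (T z) (T (T z)) = Ring.inverse (1 - a) * ((1 - a) * M.d (T z) (T (T z))) :=
        (Ring.inverse_mul_cancel_left _ _ hunit).symm
    _ ≤ Ring.inverse (1 - a) * (a * M.d z (T z)) := mul_le_mul_of_mem_center hinv_center hinv h
    _ = a * Ring.inverse (1 - a) * M.d z (T z) := by rw [← mul_assoc, (hinv_center.comm a).eq]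

theorem IsKannanType.d_iterate_succ_le (hT : IsKannanType M T a) (ha : a ∈ Set.center R)
    (ha0 : 0 ≤ a) (hb : b ∈ Set.center R) (hab : a ≤ b)
    (hstep : ∀ z, M.d (T z) (T (T z)) ≤ b * M.d z (T z)) (x y : X) (n : ℕ) :
    M.d (T^[n + 1] x) (T^[n + 1] y) ≤ b ^ (n + 1) * (M.d x (T x) + M.d y (T y)) := by
  have hb0 : 0 ≤ b := ha0.trans hab
  set D := M.d x (T x) + M.d y (T y)
  have hD : 0 ≤ b ^ n * D := mul_nonneg_of_mem_center ((Subring.center R).pow_mem hb n)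
    (pow_nonneg_of_mem_center hb hb0 n) (add_nonneg (M.nonneg _ _) (M.nonneg _ _))
  have hba : 0 ≤ (b - a) * (b ^ n * D) :=
    mul_nonneg_of_mem_center ((Subring.center R).sub_mem hb ha) (sub_nonneg.2 hab) hD
  calc M.d (T^[n + 1] x) (T^[n + 1] y)
      ≤ a * (M.d (T^[n] x) (T (T^[n] x)) + M.d (T^[n] y) (T (T^[n] y))) := by
        rw [iterate_succ_apply', iterate_succ_apply']; exact hT _ _
    _ ≤ a * (b ^ n * D) := by
        refine mul_le_mul_of_mem_center ha ha0 ?_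
        rw [mul_add]
        exact add_le_add (M.d_iterate_apply_le_pow_mul hb hb0 hstep x n)
          (M.d_iterate_apply_le_pow_mul hb hb0 hstep y n)
    _ ≤ b * (b ^ n * D) := by rwa [sub_mul, sub_nonneg] at hba
    _ = b ^ (n + 1) * D := by rw [pow_succ', mul_assoc]

end Kannan

theorem kannan_type_iterate_estimate_and_ciric2
    (M : CStarMetric X A) (T : X → X)
    (a : A) (ha_pos : 0 ≤ a) (ha_comm : ∀ b : A, a * b = b * a) (ha_norm : ‖a‖ < 1 / 2)
    (hT : ∀ x y : X, M.d (T x) (T y) ≤ a * (M.d x (T x) + M.d y (T y))) :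
    (∀ x y : X, ∀ n : ℕ, 1 ≤ n →
      M.d (T^[n] x) (T^[n] y) ≤
        (a * Ring.inverse (1 - a)) ^ n * (M.d x (T x) + M.d y (T y))) ∧
    CiricType2 M T := by
  have ha : a ∈ Set.center A := Semigroup.mem_center_iff.2 fun g => (ha_comm g).symm
  have hunit : IsUnit (1 - a) := isUnit_one_sub_of_norm_lt_one (ha_norm.trans (by norm_num))
  have hinv : 0 ≤ Ring.inverse (1 - a) := inverse_one_sub_nonneg_of_norm_lt_half ha_pos ha_norm
  set b := a * Ring.inverse (1 - a)
  have hb : b ∈ Set.center A := mul_inverse_one_sub_mem_center ha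
  have hb0 : 0 ≤ b := mul_nonneg_of_mem_center ha ha_pos hinv
  have hab : a ≤ b :=
    calc a ≤ a + a * b := le_add_of_nonneg_right (mul_nonneg_of_mem_center ha ha_pos hb0)
      _ = b := (mul_inverse_one_sub_eq_add hunit).symm
  have hest : ∀ x y : X, ∀ n : ℕ, 1 ≤ n →
      M.d (T^[n] x) (T^[n] y) ≤ b ^ n * (M.d x (T x) + M.d y (T y)) := by
    intro x y n hn
    obtain ⟨m, rfl⟩ := Nat.exists_eq_add_of_le' hn
    exact IsKannanType.d_iterate_succ_le hT ha ha_pos hb hab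
      (IsKannanType.d_apply_apply_le hT ha hunit hinv) x y m
  exact ⟨hest, fun _ _ => b, fun x y => M.d x (T x) + M.d y (T y),
    fun _ _ => ⟨hb0, fun g => (hb.comm g).eq, norm_mul_inverse_one_sub_lt_one ha_norm⟩,
    fun x y => add_nonneg (M.nonneg _ _) (M.nonneg _ _), hest⟩
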